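/- arXiv:1710.03523 — 2 statements merged into one kernel-verified Lean document; each statement's English description precedes it below -/
import Mathlib

section
/- Let {n₁ < n₂ < ⋯ < n_e} be the minimal system of generators of a numerical semigroup and suppose n_e − n₁ > n₁. Then {n₁, …, n_{e−1}, n_e − n₁} is the minimal system of generators of a numerical semigroup; that is, the submonoid of ℕ generated by {n₁, …, n_{e−1}, n_e − n₁} is a numerical semigroup whose minimal system of generators is exactly {n₁, …, n_{e−1}, n_e − n₁}. -/
open scoped Pointwise

/-- A numerical semigroup: an additive submonoid of ℕ with finite complement. -/
def IsNumericalSemigroup (S : Set ℕ) : Prop :=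
  0 ∈ S ∧ (∀ a ∈ S, ∀ b ∈ S, a + b ∈ S) ∧ Sᶜ.Finite

/-- Multiplicity: the least positive element. -/
noncomputable def mult (S : Set ℕ) : ℕ := sInf (S \ {0})

/-- Minimal system of generators: (S∖{0}) ∖ ((S∖{0})+(S∖{0})). -/
def msg (S : Set ℕ) : Set ℕ := (S \ {0}) \ ((S \ {0}) + (S \ {0}))

/-- Embedding dimension: cardinality of the minimal system of generators. -/
noncomputable def edim (S : Set ℕ) : ℕ := (msg S).ncard

/-- The submonoid of (ℕ,+) generated by a set, as a set. -/
def genSet (B : Set ℕ) : Set ℕ := (AddSubmonoid.closure B : Set ℕ)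

/-- Packed numerical semigroup: msg(S) ⊆ {m(S),…,2m(S)−1}. -/
def IsPacked (S : Set ℕ) : Prop := msg S ⊆ Set.Icc (mult S) (2 * mult S - 1)

/-- L(m,e): numerical semigroups with multiplicity m and embedding dimension e. -/
def Lset (m e : ℕ) : Set (Set ℕ) :=
  {S | IsNumericalSemigroup S ∧ mult S = m ∧ edim S = e}

/-- C(m,e): packed numerical semigroups in L(m,e). -/
def Cset (m e : ℕ) : Set (Set ℕ) := {S ∈ Lset m e | IsPacked S}

/-- φ(S): the monoid generated by {m + (x mod m) : x ∈ msg(S)}, m = mult S. -/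
noncomputable def phi (S : Set ℕ) : Set ℕ :=
  genSet ((fun x => mult S + x % mult S) '' msg S)

/-- The class [S] = {T ∈ L(m,e) : φ(T) = φ(S)}. -/
def classOf (m e : ℕ) (S : Set ℕ) : Set (Set ℕ) := {T ∈ Lset m e | phi T = phi S}

/-- Frobenius number: the largest element of the complement. -/
noncomputable def Frob (S : Set ℕ) : ℕ := sSup Sᶜ

/-- Genus: the cardinality of the complement. -/
noncomputable def genus (S : Set ℕ) : ℕ := Sᶜ.ncard

/-- The Apéry set of n in S. -/
def Ap (S : Set ℕ) (n : ℕ) : Set ℕ := {s ∈ S | ¬ ∃ t ∈ S, s = t + n}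

/-- Minimal elements of a set in a partial order. -/
def minimalsOf {β : Type*} [PartialOrder β] (X : Set β) : Set β :=
  {x ∈ X | ∀ y ∈ X, y ≤ x → y = x}

/-!
Write `a = n₁`, `e = n_e` and `B = (msg S ∖ {e}) ∪ {e - a}`. Since `e = a + (e - a)`, the monoid
generated by `B` contains `msg S`, hence `S`, so its complement is finite. By the general criterion
`msg (genSet B) = B` iff no `b ∈ B` lies in the monoid generated by `B ∖ {b}`, it remains to check
minimality. If `e - a` were generated by the other elements it would lie in `S`, and
`e = a + (e - a)` would not be a minimal generator of `S`. Any other `b ∈ B` satisfies `b < e`, so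
a representation of `b` can use `e - a > a` at most once and then only alone (every nonzero element
of `S` is at least `a`); hence `b` is generated by `msg S ∖ {b}`, which is impossible.
-/

section Generators

variable {S C B : Set ℕ}

lemma genSet_subset_of_subset (h0 : 0 ∈ S) (hadd : ∀ a ∈ S, ∀ b ∈ S, a + b ∈ S)
    (hC : C ⊆ S) : genSet C ⊆ S :=
  AddSubmonoid.closure_le (S := ⟨⟨S, fun {x y} hx hy => hadd x hx y hy⟩, h0⟩).mpr hC

lemma subset_genSet_msg (S : Set ℕ) : S ⊆ genSet (msg S) := by
  intro n hn
  induction n using Nat.strong_induction_on with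
  | _ n ih =>
    rcases eq_or_ne n 0 with rfl | hn0
    · exact zero_mem _
    by_cases hm : n ∈ msg S
    · exact AddSubmonoid.subset_closure hm
    · have hsum : n ∈ (S \ {0}) + (S \ {0}) := by_contra fun h => hm ⟨⟨hn, hn0⟩, h⟩
      obtain ⟨a, ⟨ha, ha0⟩, b, ⟨hb, hb0⟩, hab⟩ := hsum
      simp only [Set.mem_singleton_iff] at ha0 hb0 hab
      subst hab
      exact add_mem (ih a (by omega) ha) (ih b (by omega) hb)

lemma genSet_subset_union_add (C : Set ℕ) :
    genSet C ⊆ insert 0 C ∪ ((genSet C \ {0}) + (genSet C \ {0})) := by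
  intro x hx
  induction hx using AddSubmonoid.closure_induction with
  | mem x hx => exact Or.inl (Or.inr hx)
  | zero => exact Or.inl (Or.inl rfl)
  | add x y hx hy ihx ihy =>
    rcases eq_or_ne x 0 with rfl | hx0
    · simpa using ihy
    rcases eq_or_ne y 0 with rfl | hy0
    · simpa using ihx
    exact Or.inr (Set.add_mem_add ⟨hx, hx0⟩ ⟨hy, hy0⟩)

lemma msg_genSet_subset (C : Set ℕ) : msg (genSet C) ⊆ C := by
  rintro x ⟨⟨hx, hx0⟩, hxsum⟩
  rcases genSet_subset_union_add C hx with (rfl | hxC) | hxadd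
  · exact absurd rfl hx0
  · exact hxC
  · exact absurd hxadd hxsum

lemma notMem_genSet_diff_of_mem_msg (h0 : 0 ∈ S) (hadd : ∀ a ∈ S, ∀ b ∈ S, a + b ∈ S)
    {b : ℕ} (hb : b ∈ msg S) : b ∉ genSet (msg S \ {b}) := by
  intro hbgen
  have hsub : genSet (msg S \ {b}) ⊆ S :=
    genSet_subset_of_subset h0 hadd fun x hx => hx.1.1.1
  rcases genSet_subset_union_add _ hbgen with (hb0 | hbC) | hbadd
  · exact hb.1.2 hb0
  · exact hbC.2 rfl
  · exact hb.2 (Set.add_subset_add (Set.sdiff_subset_sdiff_left hsub)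
      (Set.sdiff_subset_sdiff_left hsub) hbadd)

lemma mem_msg_genSet {b : ℕ} (hb : b ∈ B) (hb0 : b ≠ 0) (hmin : b ∉ genSet (B \ {b})) :
    b ∈ msg (genSet B) := by
  refine ⟨⟨AddSubmonoid.subset_closure hb, hb0⟩, ?_⟩
  rintro ⟨u, ⟨hu, hu0⟩, v, ⟨hv, hv0⟩, huv⟩
  simp only [Set.mem_singleton_iff] at hu0 hv0 huv
  have below : ∀ x ∈ genSet B, x < b → x ∈ genSet (B \ {b}) := by
    intro x hx
    induction hx using AddSubmonoid.closure_induction with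
    | mem x hx => exact fun hxb => AddSubmonoid.subset_closure ⟨hx, hxb.ne⟩
    | zero => exact fun _ => zero_mem _
    | add x y _ _ ihx ihy => exact fun hxy => add_mem (ihx (by omega)) (ihy (by omega))
  have huv_mem := add_mem (below u hu (by omega)) (below v hv (by omega))
  exact hmin (huv ▸ huv_mem)

lemma msg_genSet_eq (h0 : 0 ∉ B) (hmin : ∀ b ∈ B, b ∉ genSet (B \ {b})) :
    msg (genSet B) = B :=
  (msg_genSet_subset B).antisymm fun b hb =>
    mem_msg_genSet hb (fun h => h0 (h ▸ hb)) (hmin b hb)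

lemma le_of_mem_genSet {m x : ℕ} (hC : ∀ c ∈ C, m ≤ c) (hx : x ∈ genSet C) (hx0 : x ≠ 0) :
    m ≤ x := by
  induction hx using AddSubmonoid.closure_induction with
  | mem x hx => exact hC x hx
  | zero => exact absurd rfl hx0
  | add x y _ _ ihx ihy =>
    rcases eq_or_ne x 0 with rfl | hx0'
    · simpa using ihy (by simpa using hx0)
    · have := ihx hx0'
      omega

lemma bddAbove_msg (hS : IsNumericalSemigroup S) : BddAbove (msg S) := by
  rcases (msg S).eq_empty_or_nonempty with h | ⟨a, ha⟩
  · simp [h]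
  obtain ⟨N, hN⟩ := hS.2.2.bddAbove
  refine ⟨N + a, fun x hx => not_lt.mp fun hlt => hx.2 ?_⟩
  have hxa : x - a ∈ S := by_contra fun h => absurd (hN h) (by omega)
  have ha0 : a ≠ 0 := ha.1.2
  exact ⟨a, ha.1, x - a, ⟨hxa, by simp; omega⟩, show a + (x - a) = x by omega⟩

end Generators

lemma subset_genSet_shift {S : Set ℕ} {a e : ℕ}
    (ha : a ∈ msg S) (hlt : a < e - a) : S ⊆ genSet ((msg S \ {e}) ∪ {e - a}) := by
  have hmsg : msg S ⊆ genSet ((msg S \ {e}) ∪ {e - a}) := by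
    intro x hx
    by_cases hxe : x = e
    · have hae : a ≠ e := by omega
      have hsum : a + (e - a) = x := by omega
      exact hsum ▸ add_mem (AddSubmonoid.subset_closure (Or.inl ⟨ha, hae⟩))
        (AddSubmonoid.subset_closure (Or.inr rfl))
    · exact AddSubmonoid.subset_closure (Or.inl ⟨hx, hxe⟩)
  exact (subset_genSet_msg S).trans (AddSubmonoid.closure_le.mpr hmsg)

lemma notMem_genSet_diff_shift {S : Set ℕ} (h0 : 0 ∈ S) (hadd : ∀ a ∈ S, ∀ b ∈ S, a + b ∈ S)
    {a e : ℕ} (ha : a ∈ msg S) (he : e ∈ msg S) (ha_le : ∀ x ∈ msg S, a ≤ x)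
    (hle_e : ∀ x ∈ msg S, x ≤ e) (hlt : a < e - a) {b : ℕ}
    (hb : b ∈ (msg S \ {e}) ∪ {e - a}) :
    b ∉ genSet (((msg S \ {e}) ∪ {e - a}) \ {b}) := by
  by_cases hbq : b = e - a
  · subst hbq
    intro hq
    have hqS : e - a ∈ S := genSet_subset_of_subset h0 hadd
      (fun x hx => (hx.1.resolve_right hx.2).1.1.1) hq
    have hae : a + (e - a) = e := by omega
    exact he.2 (hae ▸ Set.add_mem_add ha.1 ⟨hqS, by simp; omega⟩)
  · obtain ⟨hbS, hbe⟩ : b ∈ msg S \ {e} := hb.resolve_right hbq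
    have hsub : ((msg S \ {e}) ∪ {e - a}) \ {b} ⊆ {e - a} ∪ (msg S \ {b}) := by
      rintro x ⟨hx | hx, hxb⟩
      · exact Or.inr ⟨hx.1, hxb⟩
      · exact Or.inl hx
    intro hbgen
    have hb_lt : b < e := lt_of_le_of_ne (hle_e b hbS) hbe
    have hsplit : b ∈ AddSubmonoid.closure {e - a} ⊔ AddSubmonoid.closure (msg S \ {b}) := by
      rw [← AddSubmonoid.closure_union]
      exact AddSubmonoid.closure_mono hsub hbgen
    obtain ⟨_, hy, y, hyC, rfl⟩ := AddSubmonoid.mem_sup.mp hsplit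
    obtain ⟨k, rfl⟩ := AddSubmonoid.mem_closure_singleton.mp hy
    have hy_le : y = 0 ∨ a ≤ y :=
      (eq_or_ne y 0).imp_right (le_of_mem_genSet (fun x hx => ha_le x hx.1) hyC)
    -- `b = k (e - a) + y < e = a + (e - a)` forces `k = 0`, as `e - a > a` and `y = 0 ∨ y ≥ a`
    rcases k with _ | _ | k
    · exact notMem_genSet_diff_of_mem_msg h0 hadd hbS (by simpa [genSet] using hyC)
    · simp only [zero_add, one_smul] at hbq hb_lt
      omega
    · have : 2 * (e - a) ≤ (k + 1 + 1) * (e - a) := Nat.mul_le_mul_right _ (by omega)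
      simp only [smul_eq_mul] at hb_lt
      omega

/-- Lemma 7: if {n₁ < ⋯ < n_e} = msg(S) for a numerical semigroup S
and n_e − n₁ > n₁, then (msg(S) ∖ {n_e}) ∪ {n_e − n₁} generates a numerical
semigroup whose minimal system of generators is exactly that set.
Here n_e = sSup (msg S) and n₁ = sInf (msg S). -/
theorem stmt6 (S : Set ℕ) (hS : IsNumericalSemigroup S)
    (hgt : sSup (msg S) - sInf (msg S) > sInf (msg S)) :
    IsNumericalSemigroup
      (genSet ((msg S \ {sSup (msg S)}) ∪ {sSup (msg S) - sInf (msg S)})) ∧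
    msg (genSet ((msg S \ {sSup (msg S)}) ∪ {sSup (msg S) - sInf (msg S)})) =
      (msg S \ {sSup (msg S)}) ∪ {sSup (msg S) - sInf (msg S)} := by
  obtain ⟨h0, hadd, hfin⟩ := hS
  have hne : (msg S).Nonempty := Set.nonempty_iff_ne_empty.mpr fun h => by simp [h] at hgt
  have hbdd := bddAbove_msg ⟨h0, hadd, hfin⟩
  have ha := Nat.sInf_mem hne
  have he := Nat.sSup_mem hne hbdd
  have hB0 : 0 ∉ (msg S \ {sSup (msg S)}) ∪ {sSup (msg S) - sInf (msg S)} := by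
    rintro (h | h)
    · exact h.1.1.2 rfl
    · simp only [Set.mem_singleton_iff] at h
      omega
  refine ⟨⟨zero_mem _, fun x hx y hy => add_mem hx hy, ?_⟩, msg_genSet_eq hB0 fun b hb => ?_⟩
  · exact hfin.subset (Set.compl_subset_compl.mpr (subset_genSet_shift ha hgt))
  · exact notMem_genSet_diff_shift h0 hadd ha he (fun x hx => Nat.sInf_le hx)
      (fun x hx => le_csSup hbdd hx) hgt hb
end

section
/- Let 2 ≤ e ≤ m be integers and let T be a numerical semigroup with multiplicity m, embedding dimension e, and T ≠ ℕ. Then T ⊆ φ(T), and consequently F(φ(T)) ≤ F(T) and g(φ(T)) ≤ g(T); in particular, the minimum of the Frobenius number (respectively, of the genus) over all numerical semigroups with multiplicity m and embedding dimension e is attained at a packed numerical semigroup in C(m,e). -/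
open scoped Pointwise

/-!
Write m = m(T). Two minimal generators of T that are congruent modulo m would differ by a nonzero
multiple of m, making the larger one decomposable; so x ↦ m + (x mod m) is injective on msg(T),
and its image, lying in [m, 2m) and containing m, is exactly the minimal system of generators of
φ(T), which therefore is packed with multiplicity m and embedding dimension e. Each generator
x = (m + x mod m) + (⌊x/m⌋ - 1)·m of T lies in φ(T), so T ⊆ φ(T), and the Frobenius number
and the genus can only drop. Applying φ to a minimizer over L(m,e) gives a minimizer in C(m,e).
-/

lemma msg_subset (S : Set ℕ) : msg S ⊆ S := fun _ hx => hx.1.1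

lemma mult_le_of_mem {S : Set ℕ} {x : ℕ} (hx : x ∈ S) (hx0 : x ≠ 0) : mult S ≤ x :=
  Nat.sInf_le ⟨hx, hx0⟩

lemma mult_mem_msg {S : Set ℕ} (h : (S \ {0}).Nonempty) : mult S ∈ msg S := by
  refine ⟨Nat.sInf_mem h, ?_⟩
  rintro ⟨a, ⟨ha, ha0⟩, b, ⟨hb, hb0⟩, hab : a + b = mult S⟩
  have hma := mult_le_of_mem ha ha0
  have hmb := mult_le_of_mem hb hb0
  have hm0 : mult S ≠ 0 := (Nat.sInf_mem h).2
  omega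

section Submonoid

variable (M : AddSubmonoid ℕ)

lemma closure_msg : AddSubmonoid.closure (msg M) = M := by
  refine le_antisymm (AddSubmonoid.closure_le.2 (msg_subset _)) fun s hs => ?_
  induction s using Nat.strong_induction_on with
  | _ s ih =>
    rcases eq_or_ne s 0 with rfl | hs0
    · exact zero_mem _
    by_cases hgen : s ∈ msg M
    · exact AddSubmonoid.subset_closure hgen
    obtain ⟨a, ⟨ha, ha0⟩, b, ⟨hb, hb0⟩, hab : a + b = s⟩ :
        s ∈ ((M : Set ℕ) \ {0}) + ((M : Set ℕ) \ {0}) := by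
      by_contra h
      exact hgen ⟨⟨hs, hs0⟩, h⟩
    simp only [Set.mem_singleton_iff] at ha0 hb0
    rw [← hab]
    exact add_mem (ih a (by omega) ha) (ih b (by omega) hb)

lemma nsmul_mult_mem (k : ℕ) : k • mult (M : Set ℕ) ∈ M := by
  rcases ((M : Set ℕ) \ {0}).eq_empty_or_nonempty with h | h
  · simp [mult, h]
  · exact nsmul_mem (Nat.sInf_mem h).1 k

lemma msg_injOn_mod : Set.InjOn (· % mult (M : Set ℕ)) (msg M) := by
  set m := mult (M : Set ℕ)
  suffices key : ∀ x ∈ msg M, ∀ y ∈ msg M, x % m = y % m → x ≤ y from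
    fun x hx y hy h => le_antisymm (key x hx y hy h) (key y hy x hx h.symm)
  intro x hx y hy hxy
  by_contra! hlt
  obtain ⟨k, hk⟩ := (Nat.modEq_iff_dvd' hlt.le).1 hxy.symm
  refine hx.2 ⟨y, hy.1, k • m, ⟨nsmul_mult_mem M k, ?_⟩, ?_⟩
  · simp only [Set.mem_singleton_iff, smul_eq_mul]
    intro h
    rw [mul_comm] at h
    omega
  · simp only [smul_eq_mul, mul_comm k]
    omega

end Submonoid

section IntervalGenerated

variable {B : Set ℕ} {m : ℕ}

lemma eq_zero_or_le_of_mem_genSet (hB : ∀ b ∈ B, m ≤ b) {s : ℕ} (hs : s ∈ genSet B) :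
    s = 0 ∨ m ≤ s := by
  induction hs using AddSubmonoid.closure_induction with
  | mem x hx => exact Or.inr (hB x hx)
  | zero => exact Or.inl rfl
  | add x y _ _ hx hy => omega

lemma msg_genSet (hB : B ⊆ Set.Ico m (2 * m)) : msg (genSet B) = B := by
  have hBm : ∀ b ∈ B, m ≤ b := fun b hb => (hB hb).1
  apply Set.Subset.antisymm
  · rintro s ⟨⟨hs, hs0⟩, hirr⟩
    induction hs using AddSubmonoid.closure_induction_left with
    | zero => exact absurd rfl hs0
    | add_left b hb t ht _ =>
      rcases eq_or_ne t 0 with rfl | ht0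
      · simpa using hb
      have hb0 : b ∉ ({0} : Set ℕ) := by
        have := hB hb
        simp only [Set.mem_Ico] at this
        simp only [Set.mem_singleton_iff]
        omega
      exact absurd ⟨b, ⟨AddSubmonoid.subset_closure hb, hb0⟩, t, ⟨ht, ht0⟩, rfl⟩ hirr
  · intro b hb
    obtain ⟨hmb, hb2m⟩ := hB hb
    have hb0 : b ∉ ({0} : Set ℕ) := by
      simp only [Set.mem_singleton_iff]
      omega
    refine ⟨⟨AddSubmonoid.subset_closure hb, hb0⟩, ?_⟩
    rintro ⟨u, ⟨hu, hu0⟩, v, ⟨hv, hv0⟩, huv : u + v = b⟩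
    have hmu := (eq_zero_or_le_of_mem_genSet hBm hu).resolve_left hu0
    have hmv := (eq_zero_or_le_of_mem_genSet hBm hv).resolve_left hv0
    omega

lemma mult_genSet (hB : B ⊆ Set.Ico m (2 * m)) (hm : m ∈ B) : mult (genSet B) = m := by
  have hm0 : m ≠ 0 := by
    have := hB hm
    simp only [Set.mem_Ico] at this
    omega
  refine le_antisymm (mult_le_of_mem (AddSubmonoid.subset_closure hm) hm0) ?_
  refine le_csInf ⟨m, AddSubmonoid.subset_closure hm, hm0⟩ fun s ⟨hs, hs0⟩ => ?_
  exact (eq_zero_or_le_of_mem_genSet (fun b hb => (hB hb).1) hs).resolve_left hs0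

end IntervalGenerated

lemma residue_image_subset_Ico {m : ℕ} (hm : 0 < m) (A : Set ℕ) :
    (fun x => m + x % m) '' A ⊆ Set.Ico m (2 * m) := by
  rintro _ ⟨x, -, rfl⟩
  have := Nat.mod_lt x hm
  simp only [Set.mem_Ico]
  omega

namespace IsNumericalSemigroup

variable {S : Set ℕ}

def toAddSubmonoid (hS : IsNumericalSemigroup S) : AddSubmonoid ℕ where
  carrier := S
  add_mem' ha hb := hS.2.1 _ ha _ hb
  zero_mem' := hS.1

lemma nonempty_diff_zero (hS : IsNumericalSemigroup S) : (S \ {0}).Nonempty := by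
  have hinf : S.Infinite := by simpa using hS.2.2.infinite_compl
  exact (hinf.sdiff (Set.finite_singleton 0)).nonempty

lemma mult_pos (hS : IsNumericalSemigroup S) : 0 < mult S :=
  Nat.pos_of_ne_zero (Nat.sInf_mem hS.nonempty_diff_zero).2

lemma mult_mem_msg (hS : IsNumericalSemigroup S) : mult S ∈ msg S :=
  _root_.mult_mem_msg hS.nonempty_diff_zero

lemma msg_phi (hS : IsNumericalSemigroup S) :
    msg (phi S) = (fun x => mult S + x % mult S) '' msg S :=
  msg_genSet (residue_image_subset_Ico hS.mult_pos _)

lemma mult_phi (hS : IsNumericalSemigroup S) : mult (phi S) = mult S :=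
  mult_genSet (residue_image_subset_Ico hS.mult_pos _) ⟨mult S, hS.mult_mem_msg, by simp⟩

lemma edim_phi (hS : IsNumericalSemigroup S) : edim (phi S) = edim S := by
  rw [edim, hS.msg_phi, Set.InjOn.ncard_image, edim]
  exact fun x hx y hy h => msg_injOn_mod hS.toAddSubmonoid hx hy (Nat.add_left_cancel h)

lemma isPacked_phi (hS : IsNumericalSemigroup S) : IsPacked (phi S) := by
  rw [IsPacked, hS.msg_phi, hS.mult_phi]
  intro b hb
  have := residue_image_subset_Ico hS.mult_pos _ hb
  simp only [Set.mem_Ico] at this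
  simp only [Set.mem_Icc]
  omega

lemma subset_phi (hS : IsNumericalSemigroup S) : S ⊆ phi S := by
  set m := mult S
  have hm : m ∈ phi S := AddSubmonoid.subset_closure ⟨m, hS.mult_mem_msg, by simp [m]⟩
  have hmsg : msg S ⊆ phi S := fun x hx => by
    have hx1 : 1 ≤ x / m := (Nat.one_le_div_iff hS.mult_pos).2 (mult_le_of_mem hx.1.1 hx.1.2)
    obtain ⟨q, hq⟩ : ∃ q, x / m = q + 1 := ⟨x / m - 1, by omega⟩
    have hx_eq : x = (m + x % m) + q • m := by
      have := Nat.div_add_mod x m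
      rw [hq] at this
      rw [smul_eq_mul]
      linarith
    rw [hx_eq]
    exact add_mem (AddSubmonoid.subset_closure ⟨x, hx, rfl⟩) (nsmul_mem hm q)
  exact fun x hx => AddSubmonoid.closure_le.2 hmsg ((closure_msg hS.toAddSubmonoid).ge hx)

end IsNumericalSemigroup

lemma isNumericalSemigroup_phi {S : Set ℕ} (hS : IsNumericalSemigroup S) :
    IsNumericalSemigroup (phi S) :=
  ⟨zero_mem _, fun _ ha _ hb => add_mem ha hb,
    hS.2.2.subset (Set.compl_subset_compl.2 hS.subset_phi)⟩

lemma phi_mem_Cset {m e : ℕ} {S : Set ℕ} (hS : S ∈ Lset m e) : phi S ∈ Cset m e :=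
  ⟨⟨isNumericalSemigroup_phi hS.1, hS.1.mult_phi.trans hS.2.1, hS.1.edim_phi.trans hS.2.2⟩,
    hS.1.isPacked_phi⟩

lemma Frob_le_of_subset {A C : Set ℕ} (h : A ⊆ C) (hA : Aᶜ.Finite) : Frob C ≤ Frob A := by
  rcases Cᶜ.eq_empty_or_nonempty with hC | hC
  · simp [Frob, hC]
  · exact csSup_le_csSup hA.bddAbove hC (Set.compl_subset_compl.2 h)

lemma genus_le_of_subset {A C : Set ℕ} (h : A ⊆ C) (hA : Aᶜ.Finite) : genus C ≤ genus A :=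
  Set.ncard_le_ncard (Set.compl_subset_compl.2 h) hA

lemma exists_mem_Cset_forall_le {m e : ℕ} (f : Set ℕ → ℕ)
    (hf : ∀ S ∈ Lset m e, f (phi S) ≤ f S) {T : Set ℕ} (hT : T ∈ Lset m e) :
    ∃ S ∈ Cset m e, ∀ T' ∈ Lset m e, f S ≤ f T' := by
  have hS₀ := Function.argminOn_mem f (Lset m e) ⟨T, hT⟩
  exact ⟨_, phi_mem_Cset hS₀, fun T' hT' => (hf _ hS₀).trans (Function.argminOn_le f _ hT')⟩

theorem stmt18_general (m e : ℕ)
    (T : Set ℕ) (hT : T ∈ Lset m e) :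
    T ⊆ phi T ∧ Frob (phi T) ≤ Frob T ∧ genus (phi T) ≤ genus T ∧
    (∃ S ∈ Cset m e, ∀ T' ∈ Lset m e, Frob S ≤ Frob T') ∧
    (∃ S ∈ Cset m e, ∀ T' ∈ Lset m e, genus S ≤ genus T') := by
  have hFrob : ∀ S ∈ Lset m e, Frob (phi S) ≤ Frob S :=
    fun S hS => Frob_le_of_subset hS.1.subset_phi hS.1.2.2
  have hgenus : ∀ S ∈ Lset m e, genus (phi S) ≤ genus S :=
    fun S hS => genus_le_of_subset hS.1.subset_phi hS.1.2.2
  exact ⟨hT.1.subset_phi, hFrob T hT, hgenus T hT,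
    exists_mem_Cset_forall_le Frob hFrob hT, exists_mem_Cset_forall_le genus hgenus hT⟩

/-- for T ∈ L(m,e), T ≠ ℕ, one has T ⊆ φ(T), hence
F(φ(T)) ≤ F(T) and g(φ(T)) ≤ g(T); in particular the minimum of the Frobenius
number (resp. the genus) over L(m,e) is attained at a packed semigroup of C(m,e). -/
theorem stmt18 (m e : ℕ) (h2 : 2 ≤ e) (hem : e ≤ m)
    (T : Set ℕ) (hT : T ∈ Lset m e) (hTne : T ≠ Set.univ) :
    T ⊆ phi T ∧ Frob (phi T) ≤ Frob T ∧ genus (phi T) ≤ genus T ∧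
    (∃ S ∈ Cset m e, ∀ T' ∈ Lset m e, Frob S ≤ Frob T') ∧
    (∃ S ∈ Cset m e, ∀ T' ∈ Lset m e, genus S ≤ genus T') :=
  stmt18_general m e T hT
end
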